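/- Pauli type counting (Lemma 3.7). For X ∈ 𝒫 let 𝒮_X = {(P,Q) ∈ 𝒫_k × 𝒫_{k'} : [P,Q] = 2iX or [P,Q] = −2iX}, and define the type of (P,Q) ∈ 𝒮_X as the pair of integers (|supp(P)|, |supp(P) ∩ supp(Q)|). Then: (a) for every X ∈ 𝒫, the set of types occurring among elements of 𝒮_X has at most k² elements; (b) if (P,Q) and (P',Q') are both in 𝒮_X and have the same type, then supp(P) ∩ supp(Q') ≠ ∅. -/

import Mathlib

open Complex Matrix
open scoped BigOperators Classical

noncomputable section

/-- The space of `n`-qubit operators, as matrices indexed by bit-strings. -/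
abbrev QMat (n : ℕ) := Matrix (Fin n → Fin 2) (Fin n → Fin 2) ℂ

/-- The single-qubit Pauli matrices, indexed so that `0 = σ_I`, `1 = σ_x`, `2 = σ_y`,
`3 = σ_z`. -/
def pauli1 (a : Fin 4) : Matrix (Fin 2) (Fin 2) ℂ :=
  if a = 0 then 1
  else if a = 1 then !![0, 1; 1, 0]
  else if a = 2 then !![0, -Complex.I; Complex.I, 0]
  else !![1, 0; 0, -1]

/-- The `n`-qubit Pauli (Kronecker product of single-qubit Paulis) described by
`p : Fin n → Fin 4`. -/
def PauliOp {n : ℕ} (p : Fin n → Fin 4) : QMat n :=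
  Matrix.of fun x y => ∏ i, pauli1 (p i) (x i) (y i)

/-- The support of a Pauli: the set of qubits where it acts non-trivially. -/
def psupp {n : ℕ} (p : Fin n → Fin 4) : Finset (Fin n) :=
  Finset.univ.filter fun i => p i ≠ 0

/-- Commutator `[A, B] = A*B - B*A`. -/
def cm {α : Type*} [Ring α] (A B : α) : α := A * B - B * A

/-- Frobenius norm of a complex square matrix. -/
def frobNorm {m : Type*} [Fintype m] (M : Matrix m m ℂ) : ℝ :=
  Real.sqrt (∑ x, ∑ y, ‖M x y‖ ^ 2)

/-- Matrix exponential. -/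
def mexp {m : Type*} [Fintype m] [DecidableEq m] (M : Matrix m m ℂ) : Matrix m m ℂ :=
  NormedSpace.exp M

/-- The coefficient of the Pauli `p` in the Pauli expansion `M = Σ_Q c_Q Q`. -/
def pauliCoeff {n : ℕ} (M : QMat n) (p : Fin n → Fin 4) : ℂ :=
  Matrix.trace (M * PauliOp p) / (2 ^ n : ℂ)

/-- The local norm `‖M‖₍₁₎ = max_i Σ_{Q : i ∈ supp(Q)} |c_Q|`. -/
def lonorm {n : ℕ} (M : QMat n) : ℝ :=
  ⨆ i : Fin n, ∑ p : Fin n → Fin 4,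
    if i ∈ psupp p then ‖pauliCoeff M p‖ else 0

/-- The local norm `‖M‖₍₂₎ = max_i (Σ_{Q : i ∈ supp(Q)} |c_Q|²)^{1/2}`. -/
def ltnorm {n : ℕ} (M : QMat n) : ℝ :=
  ⨆ i : Fin n, Real.sqrt (∑ p : Fin n → Fin 4,
    if i ∈ psupp p then ‖pauliCoeff M p‖ ^ 2 else 0)

/-- `H` is the Hamiltonian `Σ_a λ_a E_a` with distinct non-identity Pauli terms. -/
def IsHamiltonian {n m : ℕ} (lam : Fin m → ℝ) (E : Fin m → Fin n → Fin 4) (H : QMat n) : Prop :=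
  Function.Injective E ∧ (∀ a, E a ≠ fun _ => 0) ∧ H = ∑ a, (lam a : ℂ) • PauliOp (E a)

/-- Every term of the Hamiltonian has support of size at most `k`. -/
def KLocal {n m : ℕ} (E : Fin m → Fin n → Fin 4) (k : ℕ) : Prop :=
  ∀ a, (psupp (E a)).card ≤ k

/-- `[P, Q] = 2iX` or `[P, Q] = −2iX` (as matrices). -/
def inCommClass {n : ℕ} (X P Q : Fin n → Fin 4) : Prop :=
  cm (PauliOp P) (PauliOp Q) = ((2 : ℂ) * Complex.I) • PauliOp X ∨
  cm (PauliOp P) (PauliOp Q) = (-((2 : ℂ) * Complex.I)) • PauliOp X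

/-- `𝒮_X`: the pairs `(P,Q) ∈ 𝒫_k × 𝒫_{k'}` with `[P,Q] = ±2iX`. -/
def SX (n k k' : ℕ) (X : Fin n → Fin 4) : Finset ((Fin n → Fin 4) × (Fin n → Fin 4)) :=
  Finset.univ.filter fun PQ =>
    (psupp PQ.1).card ≤ k ∧ (psupp PQ.2).card ≤ k' ∧ inCommClass X PQ.1 PQ.2

/-- The type of the pair `(P,Q)`: `(|supp(P)|, |supp(P) ∩ supp(Q)|)`. -/
def typeOf {n : ℕ} (PQ : (Fin n → Fin 4) × (Fin n → Fin 4)) : ℕ × ℕ :=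
  ((psupp PQ.1).card, (psupp PQ.1 ∩ psupp PQ.2).card)


/-!
Up to a phase, Pauli matrices multiply site by site, the label of `σ_a σ_b` being `a ^^^ b`,
and two Paulis commute when no site carries an anticommuting pair. Hence `[P, Q] = ±2iX`
forces `X = P · Q` site by site together with a site where `P` and `Q` anticommute. Such a site
lies in `supp P ∩ supp Q`, so both coordinates of a type lie in `[1, k]`, which gives (a).
For (b): on `supp P \ supp Q` and at the anticommuting site `X` agrees with `P` up to a nonzero
factor, so `|supp P ∩ supp X| > |supp P| - |supp P ∩ supp Q|`. If `supp P` missed `supp Q'`,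
then `X = P'` on `supp P`, so `supp P ∩ supp X ⊆ supp P' \ supp Q'`, whose size is
`|supp P'| - |supp P' ∩ supp Q'|`; equal types make the two bounds contradict each other.
-/

open Finset

def pauliPhase : Fin 4 → Fin 4 → ℂ :=
  ![![1, 1, 1, 1], ![1, 1, I, -I], ![1, -I, 1, I], ![1, I, -I, 1]]

lemma pauli1_mul (a b : Fin 4) : pauli1 a * pauli1 b = pauliPhase a b • pauli1 (a ^^^ b) := by
  fin_cases a <;> fin_cases b <;> ext i j <;> fin_cases i <;> fin_cases j <;>
    simp [pauli1, pauliPhase, Matrix.mul_apply, Fin.sum_univ_two, Matrix.one_apply]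

def pauliAnticomm (a b : Fin 4) : Prop := a ≠ 0 ∧ b ≠ 0 ∧ a ≠ b

lemma fin4_xor_eq_zero_iff {a b : Fin 4} : a ^^^ b = 0 ↔ a = b := by
  revert a b; decide

lemma pauliPhase_self (a : Fin 4) : pauliPhase a a = 1 := by
  fin_cases a <;> rfl

lemma pauliPhase_comm {a b : Fin 4} (h : ¬pauliAnticomm a b) :
    pauliPhase b a = pauliPhase a b := by
  fin_cases a <;> fin_cases b <;> simp_all [pauliAnticomm, pauliPhase]

lemma trace_pauli1 (a : Fin 4) : trace (pauli1 a) = if a = 0 then 2 else 0 := by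
  fin_cases a <;> simp [pauli1, Matrix.trace, Fin.sum_univ_two]

lemma mem_psupp {n : ℕ} {p : Fin n → Fin 4} {i : Fin n} : i ∈ psupp p ↔ p i ≠ 0 := by
  simp [psupp]

def pauliMulLabel {n : ℕ} (P Q : Fin n → Fin 4) : Fin n → Fin 4 := fun i => P i ^^^ Q i

section PauliOp

variable {n : ℕ}

lemma PauliOp_mul (P Q : Fin n → Fin 4) :
    PauliOp P * PauliOp Q = (∏ i, pauliPhase (P i) (Q i)) • PauliOp (pauliMulLabel P Q) := by
  ext x y
  simp only [Matrix.mul_apply, PauliOp, pauliMulLabel, Matrix.of_apply, Matrix.smul_apply,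
    smul_eq_mul, ← prod_mul_distrib]
  calc ∑ z : Fin n → Fin 2, ∏ i, pauli1 (P i) (x i) (z i) * pauli1 (Q i) (z i) (y i)
      = ∏ i, (pauli1 (P i) * pauli1 (Q i)) (x i) (y i) := by
        simp only [Matrix.mul_apply, prod_univ_sum, Fintype.piFinset_univ]
    _ = ∏ i, pauliPhase (P i) (Q i) * pauli1 (P i ^^^ Q i) (x i) (y i) := by
        simp only [pauli1_mul, Matrix.smul_apply, smul_eq_mul]

lemma trace_PauliOp (R : Fin n → Fin 4) : trace (PauliOp R) = ∏ i, trace (pauli1 (R i)) := by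
  simp only [Matrix.trace, Matrix.diag_apply, PauliOp, Matrix.of_apply, prod_univ_sum,
    Fintype.piFinset_univ]

lemma trace_PauliOp_mul_self (X : Fin n → Fin 4) :
    trace (PauliOp X * PauliOp X) = 2 ^ n := by
  simp [PauliOp_mul, trace_PauliOp, pauliMulLabel, pauliPhase_self, trace_pauli1]

lemma PauliOp_ne_zero (X : Fin n → Fin 4) : PauliOp X ≠ 0 := by
  intro h
  have h0 : (0 : ℂ) = 2 ^ n := by simpa [h] using trace_PauliOp_mul_self X
  exact pow_ne_zero n two_ne_zero h0.symm

lemma eq_of_smul_PauliOp_eq_smul {R X : Fin n → Fin 4} {c d : ℂ} (hd : d ≠ 0)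
    (h : c • PauliOp R = d • PauliOp X) : R = X := by
  by_contra hRX
  obtain ⟨i, hi⟩ := Function.ne_iff.1 hRX
  have hR : trace (PauliOp R * PauliOp X) = 0 := by
    rw [PauliOp_mul, trace_smul, trace_PauliOp]
    refine smul_eq_zero_of_right _ (prod_eq_zero (mem_univ i) ?_)
    simpa [trace_pauli1, pauliMulLabel, fin4_xor_eq_zero_iff] using hi
  have := congrArg (fun M => trace (M * PauliOp X)) h
  simp only [Matrix.smul_mul, trace_smul, hR, trace_PauliOp_mul_self, smul_zero] at this
  exact smul_ne_zero hd (pow_ne_zero n two_ne_zero) this.symm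

lemma cm_PauliOp (P Q : Fin n → Fin 4) :
    cm (PauliOp P) (PauliOp Q) =
      (∏ i, pauliPhase (P i) (Q i) - ∏ i, pauliPhase (Q i) (P i)) •
        PauliOp (pauliMulLabel P Q) := by
  have hcomm : pauliMulLabel Q P = pauliMulLabel P Q := funext fun i => Fin.xor_comm _ _
  rw [cm, PauliOp_mul, PauliOp_mul, hcomm, sub_smul]

lemma exists_anticomm_of_cm_PauliOp_ne_zero {P Q : Fin n → Fin 4}
    (h : cm (PauliOp P) (PauliOp Q) ≠ 0) : ∃ i, pauliAnticomm (P i) (Q i) := by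
  by_contra! hcomm
  have hphase (i : Fin n) : pauliPhase (Q i) (P i) = pauliPhase (P i) (Q i) :=
    pauliPhase_comm (hcomm i)
  exact h (by simp only [cm_PauliOp, hphase, sub_self, zero_smul])

end PauliOp

namespace inCommClass

variable {n : ℕ} {X P Q : Fin n → Fin 4}

lemma exists_cm_eq_smul (h : inCommClass X P Q) :
    ∃ d : ℂ, d ≠ 0 ∧ cm (PauliOp P) (PauliOp Q) = d • PauliOp X := by
  have h2I : (2 : ℂ) * I ≠ 0 := mul_ne_zero two_ne_zero I_ne_zero
  rcases h with h | h
  · exact ⟨_, h2I, h⟩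
  · exact ⟨_, neg_ne_zero.2 h2I, h⟩

lemma pauliMulLabel_eq (h : inCommClass X P Q) : pauliMulLabel P Q = X := by
  obtain ⟨d, hd, h⟩ := h.exists_cm_eq_smul
  rw [cm_PauliOp] at h
  exact eq_of_smul_PauliOp_eq_smul hd h

lemma exists_anticomm (h : inCommClass X P Q) : ∃ i, pauliAnticomm (P i) (Q i) := by
  obtain ⟨d, hd, h⟩ := h.exists_cm_eq_smul
  exact exists_anticomm_of_cm_PauliOp_ne_zero (h ▸ smul_ne_zero hd (PauliOp_ne_zero X))

lemma psupp_inter_nonempty (h : inCommClass X P Q) : (psupp P ∩ psupp Q).Nonempty := by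
  obtain ⟨i, hP, hQ, -⟩ := h.exists_anticomm
  exact ⟨i, mem_inter.2 ⟨mem_psupp.2 hP, mem_psupp.2 hQ⟩⟩

end inCommClass

section Support

variable {n : ℕ} {P Q : Fin n → Fin 4}

lemma card_psupp_sdiff_lt (h : ∃ i, pauliAnticomm (P i) (Q i)) :
    #(psupp P \ psupp Q) < #(psupp P ∩ psupp (pauliMulLabel P Q)) := by
  obtain ⟨i, hP, hQ, hPQ⟩ := h
  refine card_lt_card (ssubset_iff.2 ⟨i, ?_, ?_⟩)
  · simp [mem_psupp, hQ]
  · intro j hj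
    simp only [mem_insert, mem_sdiff, mem_inter, mem_psupp, pauliMulLabel] at hj ⊢
    rcases hj with rfl | ⟨hP, hQ⟩
    · exact ⟨hP, by simpa [fin4_xor_eq_zero_iff] using hPQ⟩
    · simp_all

lemma inter_psupp_pauliMulLabel_subset {S : Finset (Fin n)} (h : Disjoint S (psupp Q)) :
    S ∩ psupp (pauliMulLabel P Q) ⊆ psupp P \ psupp Q := by
  intro i hi
  obtain ⟨hS, hX⟩ := mem_inter.1 hi
  have hQ : Q i = 0 := by simpa [mem_psupp] using disjoint_left.1 h hS
  simp_all [mem_psupp, pauliMulLabel]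

lemma typeOf_mem_Icc_prod_Icc {k : ℕ} (hk : #(psupp P) ≤ k)
    (h : (psupp P ∩ psupp Q).Nonempty) : typeOf (P, Q) ∈ Icc 1 k ×ˢ Icc 1 k := by
  have hinter : #(psupp P ∩ psupp Q) ≤ #(psupp P) := card_le_card inter_subset_left
  have hpos := h.card_pos
  simp only [typeOf, mem_product, mem_Icc]
  omega

end Support

/-- Lemma 3.7: Pauli type counting. -/
theorem pauli_type_counting (n k k' : ℕ) :
    (∀ X : Fin n → Fin 4, ((SX n k k' X).image typeOf).card ≤ k ^ 2) ∧
    (∀ X : Fin n → Fin 4, ∀ P Q P' Q' : Fin n → Fin 4,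
      (P, Q) ∈ SX n k k' X → (P', Q') ∈ SX n k k' X → typeOf (P, Q) = typeOf (P', Q') →
      psupp P ∩ psupp Q' ≠ ∅) := by
  constructor
  · intro X
    have hsub : (SX n k k' X).image typeOf ⊆ Icc 1 k ×ˢ Icc 1 k := by
      refine image_subset_iff.2 fun PQ hPQ => ?_
      obtain ⟨-, hk, -, hc⟩ := mem_filter.1 hPQ
      exact typeOf_mem_Icc_prod_Icc hk hc.psupp_inter_nonempty
    simpa [sq] using card_le_card hsub
  · intro X P Q P' Q' hPQ hPQ' htype hdisj
    have hc : inCommClass X P Q := (mem_filter.1 hPQ).2.2.2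
    have hc' : inCommClass X P' Q' := (mem_filter.1 hPQ').2.2.2
    have hlt := card_psupp_sdiff_lt hc.exists_anticomm
    have hle := card_le_card (inter_psupp_pauliMulLabel_subset (P := P')
      (disjoint_iff_inter_eq_empty.2 hdisj))
    rw [hc.pauliMulLabel_eq] at hlt
    rw [hc'.pauliMulLabel_eq] at hle
    simp only [typeOf, Prod.mk.injEq] at htype
    have := card_sdiff_add_card_inter (psupp P) (psupp Q)
    have := card_sdiff_add_card_inter (psupp P') (psupp Q')
    omega
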